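/- arXiv:2008.02309 — 6 statements merged into one kernel-verified Lean document; each statement's English description precedes it below -/
import Mathlib

section
/- Let S be a Rees matrix semigroup over a group G with index sets Λ and I and sandwich matrix P, i.e., the set of triples (λ, g, i) with multiplication (λ, g, i)·(μ, h, j) = (λ, g·p(i,μ)·h, j). If P is normalized (p(i,λ₀) = 1 and p(i₀,λ) = 1 for fixed indices i₀, λ₀ and all i, λ) and S satisfies the quasi-identity ∀ a b α β, a·α = a·β → b·α = b·β, then p(i,λ) = 1 for all i ∈ I, λ ∈ Λ, or |Λ| = |I| = 1. -/
/-- Multiplication of a Rees matrix semigroup over a group `G` with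
sandwich matrix `P`. -/
def reesMul {G Λ I : Type*} [Group G] (P : I → Λ → G) :
    (Λ × G × I) → (Λ × G × I) → (Λ × G × I) :=
  fun p q => (p.1, p.2.1 * P p.2.2 q.1 * q.2.1, q.2.2)

theorem rees_quasi_identity_implies_band {G Λ I : Type*} [Group G]
    [Nonempty Λ] [Nonempty I] (P : I → Λ → G) (i₀ : I) (l₀ : Λ)
    (hrow : ∀ l : Λ, P i₀ l = 1) (hcol : ∀ i : I, P i l₀ = 1)
    (hQI : ∀ a b α β : Λ × G × I,
      reesMul P a α = reesMul P a β → reesMul P b α = reesMul P b β) :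
    (∀ (i : I) (l : Λ), P i l = 1) ∨
      ((∀ l l' : Λ, l = l') ∧ (∀ i i' : I, i = i')) := by
  left
  intro i l
  have h := hQI (l₀, 1, i₀) (l₀, 1, i) (l, 1, i₀) (l₀, 1, i₀)
    (by simp [reesMul, hrow])
  simpa [reesMul, hcol] using congrArg (fun p => p.2.1) h
end

section
/- Let S be a semigroup containing a central idempotent e such that e·S is a group with identity e, and suppose every product of two elements of S lies in e·S. Then S satisfies: ∀ a b α β, α·a = β·a → α·b = β·b. -/
theorem homogroup_right_quasi_identity (S : Type*) [Semigroup S] (e : S)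
    (hidem : e * e = e) (hcentral : ∀ s : S, e * s = s * e)
    (hinv : ∀ s : S, ∃ t : S, (e * s) * (e * t) = e ∧ (e * t) * (e * s) = e)
    (hred : ∀ x y : S, ∃ s : S, x * y = e * s) :
    ∀ a b α β : S, α * a = β * a → α * b = β * b := by
  -- every product is absorbed by e on the left
  have habs : ∀ x y : S, e * (x * y) = x * y := by
    intro x y
    obtain ⟨s, hs⟩ := hred x y
    rw [hs, ← mul_assoc, hidem]
  intro a b α β h
  obtain ⟨t, ht, _⟩ := hinv a
  have key : ∀ γ : S, γ * e = ((γ * a) * e) * (e * t) := by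
    intro γ
    calc γ * e = γ * ((e * a) * (e * t)) := by rw [ht]
    _ = ((γ * a) * e) * (e * t) := by
      rw [← mul_assoc γ (e * a), hcentral a, ← mul_assoc γ a e]
  have he : α * e = β * e := by rw [key α, key β, h]
  calc α * b = e * (α * b) := (habs α b).symm
  _ = (α * e) * b := by rw [← mul_assoc, hcentral]
  _ = (β * e) * b := by rw [he]
  _ = e * (β * b) := by rw [← hcentral, mul_assoc]
  _ = β * b := habs β b
end

section
/- Let S be a semigroup satisfying both quasi-identities (∀ a b α β, a·α = a·β → b·α = b·β and ∀ a b α β, α·a = β·a → α·b = β·b), and let T = S^I be a direct power. For any family {(c_k, d_k) : k ∈ K} of pairs of elements of T, if the system {x·c_k = d_k : k ∈ K} in one variable x has a solution ᾱ ∈ T, and β̄ ∈ T satisfies x·c_{k₀} = d_{k₀} for some fixed k₀ ∈ K, then β̄ satisfies x·c_k = d_k for all k ∈ K. -/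
theorem power_system_xcc_single_equation (S : Type*) [Semigroup S]
    (hL : ∀ a b α β : S, a * α = a * β → b * α = b * β)
    (hR : ∀ a b α β : S, α * a = β * a → α * b = β * b)
    (I K : Type*) (c d : K → (I → S)) (α₀ β₀ : I → S)
    (hα : ∀ k : K, α₀ * c k = d k) (k₀ : K) (hβ : β₀ * c k₀ = d k₀) :
    ∀ k : K, β₀ * c k = d k := by
  intro k
  funext i
  have h0 : α₀ i * c k₀ i = β₀ i * c k₀ i := by
    have h1 := congrFun (hα k₀) i
    have h2 := congrFun hβ i
    simp only [Pi.mul_apply] at h1 h2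
    rw [h1, h2]
  have h3 := hR (c k₀ i) (c k i) (α₀ i) (β₀ i) h0
  have h4 := congrFun (hα k) i
  simp only [Pi.mul_apply] at h4 ⊢
  rw [← h3, h4]
end

section
/- Let S be a semigroup satisfying both quasi-identities (∀ a b α β, a·α = a·β → b·α = b·β and ∀ a b α β, α·a = β·a → α·b = β·b), and let T = S^I be a direct power. For any family {c_k : k ∈ K} of elements of T, if the system {x·c_k = y : k ∈ K} in two variables x, y has a solution (ᾱ, β̄) ∈ T², then its solution set equals {(γ, γ·c_{k₀}) : γ ∈ T} for any fixed k₀ ∈ K; in particular the system is equivalent to the single equation x·c_{k₀} = y. -/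
theorem power_system_xcy_single_equation (S : Type*) [Semigroup S]
    (hL : ∀ a b α β : S, a * α = a * β → b * α = b * β)
    (hR : ∀ a b α β : S, α * a = β * a → α * b = β * b)
    (I K : Type*) (c : K → (I → S)) (α₀ β₀ : I → S)
    (hsol : ∀ k : K, α₀ * c k = β₀) (k₀ : K) :
    {p : (I → S) × (I → S) | ∀ k : K, p.1 * c k = p.2} =
      {p : (I → S) × (I → S) | ∃ γ : I → S, p = (γ, γ * c k₀)} := by
  ext p
  simp only [Set.mem_setOf_eq]
  constructor
  · intro h
    exact ⟨p.1, by rw [h k₀]⟩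
  · rintro ⟨γ, rfl⟩ k
    funext i
    have h0 : α₀ i * c k i = α₀ i * c k₀ i := by
      have := ((hsol k).trans (hsol k₀).symm)
      exact congrFun this i
    exact hL (α₀ i) (γ i) _ _ h0
end

section
/- Let S be a finite semigroup whose minimal two-sided ideal Ker(S) is a rectangular band of groups given as Λ × G × I with multiplication (λ, g, i)·(μ, h, j) = (λ, g·h, j), embedded as an ideal in S, and suppose S satisfies both quasi-identities of Theorem form. Then every element of S·S lies in Ker(S), i.e., the reducible elements of S coincide with Ker(S) when Ker(S) consists of reducible elements. -/
/-- Multiplication of a rectangular band of groups. -/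
def bandMul {G Λ I : Type*} [Group G] :
    (Λ × G × I) → (Λ × G × I) → (Λ × G × I) :=
  fun p q => (p.1, p.2.1 * q.2.1, q.2.2)

theorem products_lie_in_kernel (S : Type*) [Semigroup S] [Fintype S]
    {G Λ I : Type*} [Group G] [Nonempty Λ] [Nonempty I]
    (f : Λ × G × I → S) (hinj : Function.Injective f)
    (hhom : ∀ p q : Λ × G × I, f p * f q = f (bandMul p q))
    (hideal : ∀ (s : S) (p : Λ × G × I),
      s * f p ∈ Set.range f ∧ f p * s ∈ Set.range f)
    (hmin : ∀ J : Set S, J.Nonempty →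
      (∀ s : S, ∀ a ∈ J, s * a ∈ J ∧ a * s ∈ J) → Set.range f ⊆ J)
    (hL : ∀ a b α β : S, a * α = a * β → b * α = b * β)
    (hR : ∀ a b α β : S, α * a = β * a → α * b = β * b) :
    ∀ x y : S, x * y ∈ Set.range f := by
  intro x y
  obtain ⟨l0⟩ := ‹Nonempty Λ›
  obtain ⟨i₀⟩ := ‹Nonempty I›
  set e : S := f (l0, 1, i₀) with he
  have hee : e * e = e := by
    rw [he, hhom]; simp [bandMul]
  obtain ⟨q, hq⟩ : e * y ∈ Set.range f := (hideal y (l0, 1, i₀)).2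
  have h1 : e * (e * y) = e * y := by rw [← mul_assoc, hee]
  have h2 : x * (e * y) = x * y := hL e x (e * y) y h1
  rw [← h2, ← hq]
  exact (hideal x q).1
end

section
/- Let G be a group, I an index set, and T = G^I the direct power. Any system of equations over T in variables x₁,...,xₙ where each equation has one of the forms a·x_p = x_q, x_p·a = x_q, x_p·x_q = a, a·b = x_p, a·x_p = b, x_p·a = b, x_p = x_q, x_p = a, a = b, or x_p·x_q = x_r (with a, b ∈ T constants), and which is consistent, is equivalent over T to a finite subsystem. -/
/-- Atomic equations in `n` variables over a structure with multiplication,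
with constants from `T`. -/
inductive GEqn (T : Type*) (n : ℕ) where
  | mulLeftVar (a : T) (p q : Fin n)      -- a·x_p = x_q
  | mulRightVar (a : T) (p q : Fin n)     -- x_p·a = x_q
  | mulVarsConst (p q : Fin n) (a : T)    -- x_p·x_q = a
  | constsVar (a b : T) (p : Fin n)       -- a·b = x_p
  | mulLeftConst (a : T) (p : Fin n) (b : T)   -- a·x_p = b
  | mulRightConst (p : Fin n) (a b : T)   -- x_p·a = b
  | varVar (p q : Fin n)                  -- x_p = x_q
  | varConst (p : Fin n) (a : T)          -- x_p = a
  | constConst (a b : T)                  -- a = b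
  | mulVars (p q r : Fin n)               -- x_p·x_q = x_r

/-- Satisfaction of an atomic equation at a point. -/
def GEqn.Sat {T : Type*} [Mul T] {n : ℕ} :
    GEqn T n → (Fin n → T) → Prop
  | .mulLeftVar a p q, x => a * x p = x q
  | .mulRightVar a p q, x => x p * a = x q
  | .mulVarsConst p q a, x => x p * x q = a
  | .constsVar a b p, x => a * b = x p
  | .mulLeftConst a p b, x => a * x p = b
  | .mulRightConst p a b, x => x p * a = b
  | .varVar p q, x => x p = x q
  | .varConst p a, x => x p = a
  | .constConst a b, _ => a = b
  | .mulVars p q r, x => x p * x q = x r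


def GEqn.shape {T : Type*} {n : ℕ} :
    GEqn T n → Fin 10 × Option (Fin n) × Option (Fin n) × Option (Fin n)
  | .mulLeftVar _ p q => (0, some p, some q, none)
  | .mulRightVar _ p q => (1, some p, some q, none)
  | .mulVarsConst p q _ => (2, some p, some q, none)
  | .constsVar _ _ p => (3, some p, none, none)
  | .mulLeftConst _ p _ => (4, some p, none, none)
  | .mulRightConst p _ _ => (5, some p, none, none)
  | .varVar p q => (6, some p, some q, none)
  | .varConst p _ => (7, some p, none, none)
  | .constConst _ _ => (8, none, none, none)
  | .mulVars p q r => (9, some p, some q, some r)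

lemma GEqn.sat_iff_of_shape_eq {H : Type*} [Group H] {n : ℕ} {e₁ e₂ : GEqn H n}
    (hs : e₁.shape = e₂.shape) {x₀ : Fin n → H} (h₁ : e₁.Sat x₀) (h₂ : e₂.Sat x₀)
    (x : Fin n → H) : e₁.Sat x ↔ e₂.Sat x := by
  cases e₁ <;> cases e₂ <;>
    simp only [shape, Prod.mk.injEq, Option.some.injEq, and_true, true_and,
      reduceCtorEq, false_and, and_false] at hs <;>
    try exact absurd hs.1 (by decide)
  all_goals simp only [GEqn.Sat] at h₁ h₂ ⊢
  case mulLeftVar.mulLeftVar a p q a' p' q' =>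
    obtain ⟨rfl, rfl⟩ := hs
    have : a = a' := mul_right_cancel (h₁.trans h₂.symm)
    rw [this]
  case mulRightVar.mulRightVar a p q a' p' q' =>
    obtain ⟨rfl, rfl⟩ := hs
    have : a = a' := mul_left_cancel (h₁.trans h₂.symm)
    rw [this]
  case mulVarsConst.mulVarsConst p q a p' q' a' =>
    obtain ⟨rfl, rfl⟩ := hs
    rw [h₁.symm.trans h₂]
  case constsVar.constsVar a b p a' b' p' =>
    obtain rfl := hs
    rw [h₁.trans h₂.symm]
  case mulLeftConst.mulLeftConst a p b a' p' b' =>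
    obtain rfl := hs
    subst h₁ h₂
    rw [mul_left_cancel_iff, mul_left_cancel_iff]
  case mulRightConst.mulRightConst p a b p' a' b' =>
    obtain rfl := hs
    subst h₁ h₂
    rw [mul_right_cancel_iff, mul_right_cancel_iff]
  case varVar.varVar p q p' q' =>
    obtain ⟨rfl, rfl⟩ := hs
    exact Iff.rfl
  case varConst.varConst p a p' a' =>
    obtain rfl := hs
    rw [h₁.symm.trans h₂]
  case constConst.constConst a b a' b' =>
    simp [h₁, h₂]
  case mulVars.mulVars p q r p' q' r' =>
    obtain ⟨rfl, rfl, rfl⟩ := hs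
    exact Iff.rfl

theorem group_power_equationally_noetherian (G : Type*) [Group G]
    (I : Type*) (n : ℕ) (J : Type*) (E : J → GEqn (I → G) n)
    (hcons : ∃ x : Fin n → (I → G), ∀ j : J, (E j).Sat x) :
    ∃ J' : Set J, J'.Finite ∧
      ∀ x : Fin n → (I → G),
        (∀ j ∈ J', (E j).Sat x) ↔ ∀ j : J, (E j).Sat x := by
  obtain ⟨x₀, hx₀⟩ := hcons
  set f : J → Fin 10 × Option (Fin n) × Option (Fin n) × Option (Fin n) :=
    fun j => (E j).shape with hf
  have hsec : ∀ s : Set.range f, ∃ j : J, f j = s := fun s => s.2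
  choose g hg using hsec
  refine ⟨Set.range g, Set.finite_range g, fun x => ⟨fun h j => ?_, fun h j _ => h j⟩⟩
  have hj : f j ∈ Set.range f := Set.mem_range_self j
  have hmem : g ⟨f j, hj⟩ ∈ Set.range g := Set.mem_range_self _
  have hsh : (E (g ⟨f j, hj⟩)).shape = (E j).shape := hg ⟨f j, hj⟩
  exact (GEqn.sat_iff_of_shape_eq hsh (hx₀ _) (hx₀ j) x).mp (h _ hmem)
end
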